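/- arXiv:1307.0635 — 2 statements merged into one kernel-verified Lean document; each statement's English description precedes it below -/
import Mathlib

section
/- For all extended energy functions f, g ∈ E, (f ∨ g)^ω = (f^ω ∘ (g ∘ f*)*) ∨ (g ∘ f*)^ω. Together with (g∘f)^ω = (f∘g)^ω ∘ f, this makes (E, V) a Conway semiring-semimodule pair. -/
open scoped ENNReal NNReal

/-- `[0,∞]_⊥`: the nonnegative extended reals `[0,∞]` with a bottom element `⊥` adjoined. -/
abbrev EnergyVal : Type := WithBot ℝ≥0∞

noncomputable instance : CompleteLattice EnergyVal :=
  inferInstanceAs (CompleteLattice (WithBot (WithTop ℝ≥0)))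

/-- An extended energy function: `f ⊥ = ⊥`, `f x₂ ≥ f x₁ + x₂ - x₁` for `x₁ ≤ x₂`
(with `⊥ + c = ⊥`), and `f ∞ = ∞` unless `f` is constantly `⊥`. -/
def IsEnergyFunction (f : EnergyVal → EnergyVal) : Prop :=
  f ⊥ = ⊥ ∧
  (∀ x₁ x₂ : ℝ≥0∞, x₁ ≤ x₂ → f ↑x₁ + ↑(x₂ - x₁) ≤ f ↑x₂) ∧
  ((∀ x, f x = ⊥) ∨ f ↑(⊤ : ℝ≥0∞) = ↑(⊤ : ℝ≥0∞))

/-- The constant-`⊥` function `⊥̄`. -/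
def bbotFn : EnergyVal → EnergyVal := fun _ => ⊥

open Classical in
/-- The function `⊤̄` with `⊤̄ ⊥ = ⊥` and `⊤̄ x = ∞` for `x ≠ ⊥`. -/
noncomputable def ttopFn : EnergyVal → EnergyVal :=
  fun x => if x = ⊥ then ⊥ else ↑(⊤ : ℝ≥0∞)

open Classical in
/-- The star of an energy function: `f* ⊥ = ⊥`, `f* x = x` if `f x ≤ x`,
and `f* x = ∞` if `f x > x`. -/
noncomputable def starFn (f : EnergyVal → EnergyVal) : EnergyVal → EnergyVal :=
  fun x => if x = ⊥ then ⊥ else if f x ≤ x then x else ↑(⊤ : ℝ≥0∞)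

/-- The omega of an energy function, an element of the semimodule `V`
(Booleans identified with `Prop`): `f^ω x = true` iff `x ≠ ⊥` and `f x ≥ x`. -/
def omegaFn (f : EnergyVal → EnergyVal) : EnergyVal → Prop :=
  fun x => x ≠ ⊥ ∧ x ≤ f x

/-- Membership in the semimodule `V`: monotone maps `[0,∞]_⊥ → B` with `u ⊥ = false`
(Booleans identified with `Prop`, ordered `false < true`). -/
def IsV (u : EnergyVal → Prop) : Prop := ¬ u ⊥ ∧ Monotone u

/-!
Both identities are checked pointwise. For the first, `f*` and `(g ∘ f*)*` fix a point `x`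
unless they send it to `∞`, and a case split on `f x ≤ x` and `g (f* x) ≤ x` suffices.
For the second, the only nontrivial direction is `f x ≤ f (g (f x)) → x ≤ g (f x)`: an energy
function grows at least as fast as the identity, so it strictly increases wherever it is finite,
and `f (g (f x)) ≥ f x` with `g (f x) < x` forces `f x = ∞`; then `g (f x) = g ∞` is `∞` or `⊥`,
both impossible.
-/

namespace IsEnergyFunction

variable {f : EnergyVal → EnergyVal}

theorem monotone (hf : IsEnergyFunction f) : Monotone f := by
  intro x y hxy
  induction x using WithBot.recBotCoe with
  | bot => rw [hf.1]; exact bot_le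
  | coe a =>
    obtain ⟨b, rfl⟩ := WithBot.ne_bot_iff_exists.1 (ne_bot_of_le_ne_bot WithBot.coe_ne_bot hxy)
    exact le_add_of_nonneg_right (WithBot.coe_nonneg.2 zero_le) |>.trans
      (hf.2.1 a b (WithBot.coe_le_coe.1 hxy))

theorem map_lt_map (hf : IsEnergyFunction f) {a b : ℝ≥0∞} (hab : a < b) (hbot : f ↑a ≠ ⊥)
    (htop : f ↑a ≠ ↑(⊤ : ℝ≥0∞)) : f ↑a < f ↑b := by
  obtain ⟨e, he⟩ := WithBot.ne_bot_iff_exists.1 hbot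
  have he_top : e ≠ ⊤ := fun h => htop (by rw [← he, h])
  calc f ↑a = ↑e := he.symm
    _ < ↑(e + (b - a)) := WithBot.coe_lt_coe.2 (ENNReal.lt_add_right he_top (tsub_pos_of_lt hab).ne')
    _ = f ↑a + ↑(b - a) := by rw [← he, WithBot.coe_add]
    _ ≤ f ↑b := hf.2.1 a b hab.le

theorem map_top (hf : IsEnergyFunction f) {x : EnergyVal} (hx : f x ≠ ⊥) :
    f ↑(⊤ : ℝ≥0∞) = ↑(⊤ : ℝ≥0∞) :=
  hf.2.2.resolve_left fun h => hx (h x)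

end IsEnergyFunction

theorem starFn_of_le {h : EnergyVal → EnergyVal} {x : EnergyVal} (hx : x ≠ ⊥) (hle : h x ≤ x) :
    starFn h x = x := by
  simp [starFn, hx, hle]

theorem omegaFn_sup (f g : EnergyVal → EnergyVal) :
    omegaFn (fun x => f x ⊔ g x) =
      fun x => (omegaFn f ∘ starFn (g ∘ starFn f)) x ∨ omegaFn (g ∘ starFn f) x := by
  funext x
  by_cases hx : x = ⊥
  · simp [omegaFn, starFn, hx]
  simp only [omegaFn, Function.comp_apply, ne_eq, hx, not_false_eq_true, true_and, le_sup_iff,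
    eq_iff_iff]
  by_cases hgf : x ≤ g (starFn f x)
  · refine iff_of_true ?_ (Or.inr hgf)
    by_cases hfx : f x ≤ x
    · rw [starFn_of_le hx hfx] at hgf
      exact Or.inr hgf
    · exact Or.inl (not_le.1 hfx).le
  · have hstar : starFn (g ∘ starFn f) x = x := starFn_of_le hx (not_le.1 hgf).le
    -- where `f x ≤ x`, `f*` fixes `x`, so `x ≤ g x` would contradict `¬ x ≤ g (f* x)`
    have hg_imp : x ≤ g x → x ≤ f x := fun hg => by
      by_contra hfx
      rw [starFn_of_le hx (not_le.1 hfx).le] at hgf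
      exact hgf hg
    rw [hstar]
    simp only [hx, not_false_eq_true, true_and, hgf, or_false]
    exact ⟨fun h => h.elim id hg_imp, Or.inl⟩

theorem le_comp_of_map_le {f g : EnergyVal → EnergyVal} (hf : IsEnergyFunction f)
    (hg : IsEnergyFunction g) {x : EnergyVal} (hfx : f x ≠ ⊥) (hle : f x ≤ f (g (f x))) :
    x ≤ g (f x) := by
  by_contra hlt
  rw [not_le] at hlt
  have hy : g (f x) ≠ ⊥ := fun h => hfx (le_bot_iff.1 (by rwa [h, hf.1] at hle))
  obtain ⟨c, hc⟩ := WithBot.ne_bot_iff_exists.1 hy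
  obtain ⟨a, rfl⟩ := WithBot.ne_bot_iff_exists.1 (ne_bot_of_gt hlt)
  rw [← hc] at hlt hle
  have hca : c < a := WithBot.coe_lt_coe.1 hlt
  -- `f` strictly increases below `∞`, so `f a ≤ f c` with `c < a` forces `f a = ∞`
  have hfc_top : f ↑c = ↑(⊤ : ℝ≥0∞) := by
    by_contra htop
    exact (hf.map_lt_map hca (ne_bot_of_le_ne_bot hfx hle) htop).not_ge hle
  have hfa_top : f ↑a = ↑(⊤ : ℝ≥0∞) :=
    le_antisymm le_top (hfc_top ▸ hf.monotone hlt.le)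
  rw [hfa_top, hg.map_top hy] at hc
  exact hlt.not_ge (hc ▸ le_top)

theorem omegaFn_comp {f g : EnergyVal → EnergyVal} (hf : IsEnergyFunction f)
    (hg : IsEnergyFunction g) : omegaFn (g ∘ f) = omegaFn (f ∘ g) ∘ f := by
  funext x
  simp only [omegaFn, Function.comp_apply, eq_iff_iff]
  constructor
  · rintro ⟨hx, hle⟩
    have hgf : g (f x) ≠ ⊥ := ne_bot_of_le_ne_bot hx hle
    exact ⟨fun h => hgf (by rw [h, hg.1]), hf.monotone hle⟩
  · rintro ⟨hfx, hle⟩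
    exact ⟨fun h => hfx (by rw [h, hf.1]), le_comp_of_map_le hf hg hfx hle⟩

/-- For all extended energy functions `f, g`:
`(f ∨ g)^ω = (f^ω ∘ (g ∘ f*)*) ∨ (g ∘ f*)^ω`; together with
`(g ∘ f)^ω = (f ∘ g)^ω ∘ f` this makes `(E, V)` a Conway semiring-semimodule pair. -/
theorem stmt12 (f g : EnergyVal → EnergyVal)
    (hf : IsEnergyFunction f) (hg : IsEnergyFunction g) :
    (omegaFn (fun x => f x ⊔ g x) =
      fun x => (omegaFn f ∘ starFn (g ∘ starFn f)) x ∨ omegaFn (g ∘ starFn f) x) ∧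
    omegaFn (g ∘ f) = omegaFn (f ∘ g) ∘ f :=
  ⟨omegaFn_sup f g, omegaFn_comp hf hg⟩
end

section
/- Let T be an n×n matrix of extended energy functions (representing an energy automaton on states {1,…,n}, with T_{ij} labeling the transition from state j to state i), let F = {1,…,k} with k ≤ n be the accepting states, s₀ ≤ n the initial state, and x₀ ∈ [0,∞). Then there exists a finite run from (s₀, x₀) ending in a state of F if, and only if, (Fᵀ T* I^{s₀})(x₀) ≠ ⊥, where T* = sup_{m∈ℕ} Tᵐ (pointwise supremum of matrix powers over the semiring (E, ∨, ∘)), I^{s₀} is the column vector with entry id at position s₀ and the constant-⊥ function elsewhere, and Fᵀ is the row vector with entry id at positions 1,…,k and the constant-⊥ function elsewhere. -/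
open scoped ENNReal NNReal

/-- Matrix product over the semiring `(E, ∨, ∘)`: `(A B)_{ij} = sup_l A_{il} ∘ B_{lj}`. -/
noncomputable def matMul {n : ℕ} (A B : Fin n → Fin n → EnergyVal → EnergyVal) :
    Fin n → Fin n → EnergyVal → EnergyVal :=
  fun i j x => ⨆ l, A i l (B l j x)

/-- The identity matrix over `(E, ∨, ∘)`: `id` on the diagonal, `⊥̄` elsewhere. -/
def matId {n : ℕ} : Fin n → Fin n → EnergyVal → EnergyVal :=
  fun i j x => if i = j then x else ⊥

/-- Matrix powers over the semiring `(E, ∨, ∘)`. -/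
noncomputable def matPow {n : ℕ} (T : Fin n → Fin n → EnergyVal → EnergyVal) :
    ℕ → Fin n → Fin n → EnergyVal → EnergyVal
  | 0 => matId
  | m + 1 => matMul T (matPow T m)

/-- The star `T* = sup_{m∈ℕ} Tᵐ` (pointwise supremum of matrix powers). -/
noncomputable def matStar {n : ℕ} (T : Fin n → Fin n → EnergyVal → EnergyVal) :
    Fin n → Fin n → EnergyVal → EnergyVal :=
  fun i j x => ⨆ m : ℕ, matPow T m i j x

/-- The unit vector `I^s`: entry `id` at position `s`, the constant-`⊥` function
elsewhere. -/
def unitVec {n : ℕ} (s : Fin n) : Fin n → EnergyVal → EnergyVal :=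
  fun i x => if i = s then x else ⊥

/-- The product `row · A · col` of a row vector, a matrix and a column vector over
the semiring `(E, ∨, ∘)`, as a single energy function. -/
noncomputable def rowMatCol {n : ℕ} (row : Fin n → EnergyVal → EnergyVal)
    (A : Fin n → Fin n → EnergyVal → EnergyVal)
    (col : Fin n → EnergyVal → EnergyVal) : EnergyVal → EnergyVal :=
  fun x => ⨆ j, ⨆ i, row j (A j i (col i x))

/-- There is a finite run from `(s₀, x₀)` of the energy automaton with transition
matrix `T` (where `T i j` labels the transition from state `j` to state `i`) ending
in one of the accepting states `{0, …, k-1}`. -/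
def MatFinAccept {n : ℕ} (T : Fin n → Fin n → EnergyVal → EnergyVal)
    (s₀ : Fin n) (k : ℕ) (x₀ : EnergyVal) : Prop :=
  ∃ (m : ℕ) (σ : ℕ → Fin n) (ξ : ℕ → EnergyVal),
    σ 0 = s₀ ∧ ξ 0 = x₀ ∧
    (∀ t, t < m → ξ (t + 1) = T (σ (t + 1)) (σ t) (ξ t)) ∧
    (∀ t, t ≤ m → ξ t ≠ ⊥) ∧ (σ m : ℕ) < k

/-- The row vector `Fᵀ` of the accepting states `{0, …, k-1}`: entry `id` at
positions `< k`, the constant-`⊥` function elsewhere. -/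
def accVec {n : ℕ} (k : ℕ) : Fin n → EnergyVal → EnergyVal :=
  fun j x => if (j : ℕ) < k then x else ⊥

/-!
A run of length `m` from `(i, x)` to `j` never ends with more energy than `Tᵐ j i x`,
by monotonicity of the transitions, and the run that always comes from a predecessor
maximising the supremum in `Tᵐ⁺¹ = T Tᵐ` ends with exactly `Tᵐ j i x`. Since every
transition maps `⊥` to `⊥`, a run is alive (never at `⊥`) as soon as its last energy is
not `⊥`. Hence an accepting run exists iff `Tᵐ j s₀ x₀ ≠ ⊥` for some `m` and some
accepting `j`, which is what `Fᵀ T* I^{s₀}` measures.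
-/

theorem IsEnergyFunction.monotone_s17 {f : EnergyVal → EnergyVal} (hf : IsEnergyFunction f) :
    Monotone f := by
  intro a b hab
  induction a using WithBot.recBotCoe with
  | bot => simp [hf.1]
  | coe x₁ =>
    induction b using WithBot.recBotCoe with
    | bot => exact absurd hab (by simp)
    | coe x₂ =>
      refine le_trans ?_ (hf.2.1 x₁ x₂ (WithBot.coe_le_coe.mp hab))
      induction f x₁ using WithBot.recBotCoe with
      | bot => simp
      | coe y => exact WithBot.coe_le_coe.mpr le_self_add

section Runs

variable {n : ℕ} {T : Fin n → Fin n → EnergyVal → EnergyVal}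

theorem matPow_succ_apply (m : ℕ) (j i : Fin n) (x : EnergyVal) :
    matPow T (m + 1) j i x = ⨆ l, T j l (matPow T m l i x) := rfl

theorem matPow_apply_bot (hbot : ∀ i j, T i j ⊥ = ⊥) (m : ℕ) (j i : Fin n) :
    matPow T m j i ⊥ = ⊥ := by
  induction m generalizing j with
  | zero => simp [matPow, matId]
  | succ m ih => simp [matPow_succ_apply, ih, hbot]

theorem matStar_apply_bot (hbot : ∀ i j, T i j ⊥ = ⊥) (j i : Fin n) :
    matStar T j i ⊥ = ⊥ := by
  simp [matStar, matPow_apply_bot hbot]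

theorem matStar_apply_ne_bot_iff {j i : Fin n} {x : EnergyVal} :
    matStar T j i x ≠ ⊥ ↔ ∃ m, matPow T m j i x ≠ ⊥ := by
  simp [matStar]

theorem le_matPow_of_run (hmono : ∀ i j, Monotone (T i j)) {m : ℕ} {σ : ℕ → Fin n}
    {ξ : ℕ → EnergyVal} (hstep : ∀ t < m, ξ (t + 1) = T (σ (t + 1)) (σ t) (ξ t)) :
    ∀ t ≤ m, ξ t ≤ matPow T t (σ t) (σ 0) (ξ 0) := by
  intro t
  induction t with
  | zero => intro _; simp [matPow, matId]
  | succ t ih =>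
    intro ht
    calc ξ (t + 1) = T (σ (t + 1)) (σ t) (ξ t) := hstep t ht
      _ ≤ T (σ (t + 1)) (σ t) (matPow T t (σ t) (σ 0) (ξ 0)) := hmono _ _ (ih (by omega))
      _ ≤ matPow T (t + 1) (σ (t + 1)) (σ 0) (ξ 0) :=
        le_iSup (fun l => T (σ (t + 1)) l (matPow T t l (σ 0) (ξ 0))) (σ t)

theorem run_ne_bot_of_last_ne_bot (hbot : ∀ i j, T i j ⊥ = ⊥) {m : ℕ} {σ : ℕ → Fin n}
    {ξ : ℕ → EnergyVal} (hstep : ∀ t < m, ξ (t + 1) = T (σ (t + 1)) (σ t) (ξ t))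
    (hlast : ξ m ≠ ⊥) : ∀ t ≤ m, ξ t ≠ ⊥ := by
  intro t ht hξt
  have hbot_from : ∀ s, t ≤ s → s ≤ m → ξ s = ⊥ := by
    intro s hts
    induction s, hts using Nat.le_induction with
    | base => exact fun _ => hξt
    | succ s _ ih => intro hs; rw [hstep s hs, ih (by omega), hbot]
  exact hlast (hbot_from m ht le_rfl)

theorem exists_run_eq_matPow (hbot : ∀ i j, T i j ⊥ = ⊥) {m : ℕ} {j i : Fin n}
    {x : EnergyVal} (h : matPow T m j i x ≠ ⊥) :
    ∃ (σ : ℕ → Fin n) (ξ : ℕ → EnergyVal), σ 0 = i ∧ ξ 0 = x ∧ σ m = j ∧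
      ξ m = matPow T m j i x ∧ ∀ t < m, ξ (t + 1) = T (σ (t + 1)) (σ t) (ξ t) := by
  induction m generalizing j with
  | zero =>
    have hji : j = i := by by_contra hne; exact h (by simp [matPow, matId, hne])
    exact ⟨fun _ => i, fun _ => x, rfl, rfl, hji.symm, by simp [matPow, matId, hji], by simp⟩
  | succ m ih =>
    have : Nonempty (Fin n) := ⟨j⟩
    obtain ⟨l, hl⟩ := exists_eq_ciSup_of_finite (f := fun l => T j l (matPow T m l i x))
    rw [matPow_succ_apply, ← hl] at h ⊢
    obtain ⟨σ, ξ, hσ0, hξ0, hσm, hξm, hstep⟩ :=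
      ih (j := l) fun h' => h (by simp [h', hbot])
    refine ⟨fun t => if t ≤ m then σ t else j, fun t => if t ≤ m then ξ t else T j l (ξ m),
      by simp [hσ0], by simp [hξ0], by simp, by simp [hξm], ?_⟩
    intro t ht
    rcases Nat.lt_succ_iff_lt_or_eq.mp ht with ht | rfl
    · simp [ht.le, Nat.succ_le_of_lt ht, hstep t ht]
    · simp [hσm]

theorem matFinAccept_iff_exists_matPow_ne_bot (hbot : ∀ i j, T i j ⊥ = ⊥)
    (hmono : ∀ i j, Monotone (T i j)) {s : Fin n} {k : ℕ} {x : EnergyVal} :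
    MatFinAccept T s k x ↔ ∃ j : Fin n, (j : ℕ) < k ∧ ∃ m, matPow T m j s x ≠ ⊥ := by
  constructor
  · rintro ⟨m, σ, ξ, hσ0, hξ0, hstep, halive, hacc⟩
    refine ⟨σ m, hacc, m, fun h => halive m le_rfl (le_bot_iff.mp ?_)⟩
    simpa [hσ0, hξ0, h] using le_matPow_of_run hmono hstep m le_rfl
  · rintro ⟨j, hj, m, hm⟩
    obtain ⟨σ, ξ, hσ0, hξ0, hσm, hξm, hstep⟩ := exists_run_eq_matPow hbot hm
    exact ⟨m, σ, ξ, hσ0, hξ0, hstep, run_ne_bot_of_last_ne_bot hbot hstep (hξm ▸ hm),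
      hσm ▸ hj⟩

end Runs

theorem rowMatCol_accVec_unitVec_ne_bot_iff {n k : ℕ}
    {A : Fin n → Fin n → EnergyVal → EnergyVal} (hA : ∀ j i, A j i ⊥ = ⊥)
    {s : Fin n} {x : EnergyVal} :
    rowMatCol (accVec k) A (unitVec s) x ≠ ⊥ ↔
      ∃ j : Fin n, (j : ℕ) < k ∧ A j s x ≠ ⊥ := by
  simp [rowMatCol, accVec, unitVec, apply_ite, hA]

theorem stmt17_general {n : ℕ} (T : Fin n → Fin n → EnergyVal → EnergyVal)
    (hT : ∀ i j, IsEnergyFunction (T i j)) (k : ℕ) (s₀ : Fin n)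
    (x₀ : ℝ≥0∞) :
    MatFinAccept T s₀ k ↑x₀ ↔
      rowMatCol (accVec k) (matStar T) (unitVec s₀) ↑x₀ ≠ ⊥ := by
  have hbot : ∀ i j, T i j ⊥ = ⊥ := fun i j => (hT i j).1
  rw [matFinAccept_iff_exists_matPow_ne_bot hbot fun i j => (hT i j).monotone_s17,
    rowMatCol_accVec_unitVec_ne_bot_iff (matStar_apply_bot hbot)]
  simp only [matStar_apply_ne_bot_iff]

/-- Reachability via the Kleene star: there is a finite run from `(s₀, x₀)` ending
in an accepting state if, and only if, `(Fᵀ T* I^{s₀}) x₀ ≠ ⊥`. -/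
theorem stmt17 {n : ℕ} (T : Fin n → Fin n → EnergyVal → EnergyVal)
    (hT : ∀ i j, IsEnergyFunction (T i j)) (k : ℕ) (hk : k ≤ n) (s₀ : Fin n)
    (x₀ : ℝ≥0∞) (hx₀ : x₀ ≠ ⊤) :
    MatFinAccept T s₀ k ↑x₀ ↔
      rowMatCol (accVec k) (matStar T) (unitVec s₀) ↑x₀ ≠ ⊥ :=
  stmt17_general T hT k s₀ x₀
end
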